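/- arXiv:2502.11795 — 2 statements merged into one kernel-verified Lean document; each statement's English description precedes it below -/
import Mathlib

section
/- Let A be a quantale and e a full idempotent in A, i.e. e*e = e and AeA = A, where AeA = { ⋁_{i∈I} a_i*e*a'_i : {a_i}_{i∈I}, {a'_i}_{i∈I} ⊆ A }. Then the quantales A and eAe are Morita equivalent, where eAe = {e*a*e : a ∈ A} is a quantale under the multiplication of A with unit e. -/
open CategoryTheory Set

universe u v w

class UQuantale (A : Type u) extends CompleteLattice A, Monoid A where
  mul_sSup : ∀ (a : A) (s : Set A), a * sSup s = ⨆ b ∈ s, a * b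
  sSup_mul : ∀ (s : Set A) (b : A), sSup s * b = ⨆ a ∈ s, a * b

namespace UQuantale
variable {A : Type u} [UQuantale A]

theorem mul_iSup {ι : Sort w} (a : A) (f : ι → A) : a * (⨆ i, f i) = ⨆ i, a * f i := by
  rw [iSup, mul_sSup]; exact iSup_range

theorem iSup_mul {ι : Sort w} (f : ι → A) (b : A) : (⨆ i, f i) * b = ⨆ i, f i * b := by
  rw [iSup, sSup_mul]; exact iSup_range

theorem mul_bot (a : A) : a * (⊥ : A) = ⊥ := by
  have := mul_sSup a (∅ : Set A); simpa using this

theorem bot_mul (a : A) : (⊥ : A) * a = ⊥ := by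
  have := sSup_mul (∅ : Set A) a; simpa using this

end UQuantale

structure QMod (A : Type u) [UQuantale A] : Type (max u (v + 1)) where
  carrier : Type v
  [latt : CompleteLattice carrier]
  act : carrier → A → carrier
  act_one : ∀ m, act m 1 = m
  act_mul : ∀ m a b, act m (a * b) = act (act m a) b
  sSup_act : ∀ (s : Set carrier) (a : A), act (sSup s) a = ⨆ m ∈ s, act m a
  act_sSup : ∀ (m : carrier) (s : Set A), act m (sSup s) = ⨆ a ∈ s, act m a

attribute [instance] QMod.latt

namespace QMod

variable {A : Type u} [UQuantale A]

def IsHom (M N : QMod.{u, v} A) (f : M.carrier → N.carrier) : Prop :=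
  (∀ s : Set M.carrier, f (sSup s) = ⨆ m ∈ s, f m) ∧
  (∀ m a, f (M.act m a) = N.act (f m) a)

theorem isHom_id (M : QMod.{u, v} A) : IsHom M M id :=
  ⟨fun s => by simp [sSup_eq_iSup], fun _ _ => rfl⟩

theorem isHom_comp {M N P : QMod.{u, v} A} {f : M.carrier → N.carrier}
    {g : N.carrier → P.carrier} (hf : IsHom M N f) (hg : IsHom N P g) :
    IsHom M P (g ∘ f) := by
  constructor
  · intro s
    show g (f (sSup s)) = _
    rw [hf.1 s, ← sSup_image, hg.1, iSup_image]
    rfl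
  · intro m a
    show g (f (M.act m a)) = _
    rw [hf.2, hg.2]
    rfl

instance : Category.{v} (QMod.{u, v} A) where
  Hom M N := { f : M.carrier → N.carrier // IsHom M N f }
  id M := ⟨id, isHom_id M⟩
  comp f g := ⟨g.1 ∘ f.1, isHom_comp f.2 g.2⟩
  id_comp _ := Subtype.ext rfl
  comp_id _ := Subtype.ext rfl
  assoc _ _ _ := Subtype.ext rfl

theorem iSup_act (M : QMod.{u, v} A) {ι : Sort w} (g : ι → M.carrier) (a : A) :
    M.act (⨆ i, g i) a = ⨆ i, M.act (g i) a := by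
  rw [iSup, M.sSup_act]; exact iSup_range

theorem act_iSup (M : QMod.{u, v} A) (m : M.carrier) {ι : Sort w} (g : ι → A) :
    M.act m (⨆ i, g i) = ⨆ i, M.act m (g i) := by
  rw [iSup, M.act_sSup]; exact iSup_range

theorem hom_iSup {M N : QMod.{u, v} A} (f : M ⟶ N) {ι : Sort w} (g : ι → M.carrier) :
    f.1 (⨆ i, g i) = ⨆ i, f.1 (g i) := by
  rw [iSup, f.2.1, iSup_range]

/-- The pointwise supremum of a set of module morphisms is a module morphism. -/
theorem isHom_biSup {M N : QMod.{u, v} A} (s : Set (M ⟶ N)) :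
    IsHom M N (fun m => ⨆ f ∈ s, f.1 m) := by
  constructor
  · intro t
    calc (⨆ f ∈ s, f.1 (sSup t)) = ⨆ f ∈ s, ⨆ m ∈ t, f.1 m :=
          iSup_congr fun f => iSup_congr fun _ => f.2.1 t
      _ = ⨆ m ∈ t, ⨆ f ∈ s, f.1 m := iSup₂_comm _
  · intro m a
    simp only [iSup_act]
    exact iSup_congr fun f => iSup_congr fun _ => f.2.2 m a

instance homSupSet (M N : QMod.{u, v} A) : SupSet (M ⟶ N) :=
  ⟨fun s => ⟨fun m => ⨆ f ∈ s, f.1 m, isHom_biSup s⟩⟩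

instance homPartialOrder (M N : QMod.{u, v} A) : PartialOrder (M ⟶ N) :=
  inferInstanceAs (PartialOrder { f : M.carrier → N.carrier // IsHom M N f })

theorem hom_le_iff {M N : QMod.{u, v} A} {f g : M ⟶ N} : f ≤ g ↔ ∀ m, f.1 m ≤ g.1 m :=
  Iff.rfl

instance homCompleteLattice (M N : QMod.{u, v} A) : CompleteLattice (M ⟶ N) :=
  completeLatticeOfSup _ (fun s => by
    constructor
    · intro f hf
      intro m
      exact le_iSup₂ (f := fun (f : M ⟶ N) (_ : f ∈ s) => f.1 m) f hf
    · intro g hg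
      intro m
      exact iSup₂_le fun f hf => hg hf m)

theorem sSup_hom_apply {M N : QMod.{u, v} A} (s : Set (M ⟶ N)) (m : M.carrier) :
    (sSup s).1 m = ⨆ f ∈ s, f.1 m := rfl

theorem iSup_hom_apply {M N : QMod.{u, v} A} {ι : Sort w} (F : ι → (M ⟶ N)) (m : M.carrier) :
    (⨆ i, F i).1 m = ⨆ i, (F i).1 m := by
  rw [iSup]
  show ⨆ f ∈ range F, f.1 m = _
  exact iSup_range

instance endMonoid (M : QMod.{u, v} A) : Monoid (M ⟶ M) where
  mul f g := g ≫ f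
  one := 𝟙 M
  mul_assoc _ _ _ := Subtype.ext rfl
  one_mul _ := Subtype.ext rfl
  mul_one _ := Subtype.ext rfl

theorem end_mul_apply {M : QMod.{u, v} A} (f g : M ⟶ M) (m : M.carrier) :
    (f * g).1 m = f.1 (g.1 m) := rfl

/-- The endomorphism quantale `Hom_A(M,M)` of a right `A`-module `M`:
multiplication is composition, the unit is the identity, suprema are pointwise. -/
instance endQuantale (M : QMod.{u, v} A) : UQuantale (M ⟶ M) :=
  { homCompleteLattice M M, endMonoid M with
    mul_sSup := fun a s => by
      apply Subtype.ext
      funext m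
      show a.1 ((sSup s).1 m) = (⨆ b ∈ s, a * b).1 m
      rw [sSup_hom_apply]
      simp only [hom_iSup, iSup_hom_apply]
      rfl
    sSup_mul := fun s b => by
      apply Subtype.ext
      funext m
      show (sSup s).1 (b.1 m) = (⨆ a ∈ s, a * b).1 m
      rw [sSup_hom_apply]
      simp only [iSup_hom_apply]
      rfl }

/-- `Q` is a generator of the category of right `A`-modules:
the hom functor out of `Q` is faithful. -/
def IsGenerator {A : Type u} [UQuantale A] (Q : QMod.{u, v} A) : Prop :=
  ∀ {M N : QMod.{u, v} A} (f g : M ⟶ N), (∀ h : Q ⟶ M, h ≫ f = h ≫ g) → f = g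

/-- `Q` is projective: the hom functor out of `Q` sends epimorphisms to surjections. -/
def IsProjective {A : Type u} [UQuantale A] (Q : QMod.{u, v} A) : Prop :=
  ∀ {M N : QMod.{u, v} A} (p : M ⟶ N), Epi p → ∀ h : Q ⟶ N, ∃ k : Q ⟶ M, k ≫ p = h

end QMod

def MoritaEquivalent (A B : Type u) [UQuantale A] [UQuantale B] : Prop :=
  Nonempty (QMod.{u, u} A ≌ QMod.{u, u} B)

def IsQuantaleIso {A : Type u} {B : Type v} [UQuantale A] [UQuantale B] (f : A → B) : Prop :=
  Function.Bijective f ∧ (∀ s : Set A, f (sSup s) = ⨆ a ∈ s, f a) ∧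
    f 1 = 1 ∧ ∀ a a' : A, f (a * a') = f a * f a'

/-! ### Sub-sup-lattices given by sup-closed predicates -/

section SubLattice

variable {L : Type u} [CompleteLattice L]

/-- A predicate closed under arbitrary suprema. -/
class SSupClosed (p : L → Prop) : Prop where
  closed : ∀ s : Set L, (∀ x ∈ s, p x) → p (sSup s)

instance subtypeSupSet (p : L → Prop) [SSupClosed p] : SupSet { x : L // p x } :=
  ⟨fun s => ⟨sSup (Subtype.val '' s), SSupClosed.closed _ (by rintro x ⟨y, _, rfl⟩; exact y.2)⟩⟩

/-- The sub-sup-lattice on a sup-closed subset: suprema are computed as in `L`. -/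
instance subtypeCompleteLattice (p : L → Prop) [SSupClosed p] :
    CompleteLattice { x : L // p x } :=
  completeLatticeOfSup _ (fun s => by
    constructor
    · intro x hx
      show x.1 ≤ sSup (Subtype.val '' s)
      exact le_sSup (Set.mem_image_of_mem _ hx)
    · intro b hb
      show sSup (Subtype.val '' s) ≤ b.1
      refine sSup_le ?_
      rintro y ⟨z, hz, rfl⟩
      exact hb hz)

theorem subtype_sSup_val (p : L → Prop) [SSupClosed p] (s : Set { x : L // p x }) :
    (sSup s).1 = sSup (Subtype.val '' s) := rfl

theorem subtype_iSup_val {p : L → Prop} [SSupClosed p] {ι : Sort w} (f : ι → { x : L // p x }) :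
    (⨆ i, f i).1 = ⨆ i, (f i).1 := by
  show sSup (Subtype.val '' Set.range f) = _
  rw [← Set.range_comp]
  rfl

end SubLattice

/-! ### Submodules and subquantales determined by idempotents -/

section Idem

variable {A : Type u} [UQuantale A]

instance leftFixedClosed (e : A) : SSupClosed (fun a : A => e * a = a) :=
  ⟨fun s hs => by
    rw [UQuantale.mul_sSup, sSup_eq_iSup]
    exact iSup_congr fun a => iSup_congr fun ha => hs a ha⟩

instance rightFixedClosed (e : A) : SSupClosed (fun a : A => a * e = a) :=
  ⟨fun s hs => by
    rw [UQuantale.sSup_mul, sSup_eq_iSup]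
    exact iSup_congr fun a => iSup_congr fun ha => hs a ha⟩

instance cornerClosed (e : A) : SSupClosed (fun x : A => e * x * e = x) :=
  ⟨fun s hs => by
    rw [UQuantale.mul_sSup, UQuantale.iSup_mul, sSup_eq_iSup]
    exact iSup_congr fun a => by
      rw [UQuantale.iSup_mul]
      exact iSup_congr fun ha => hs a ha⟩

instance actFixedClosed (M : QMod.{u, v} A) (e : A) :
    SSupClosed (fun m : M.carrier => M.act m e = m) :=
  ⟨fun s hs => by
    rw [M.sSup_act s e, sSup_eq_iSup]
    exact iSup_congr fun m => iSup_congr fun hm => hs m hm⟩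

/-- The right `A`-module `eA = {a : A // e * a = a}` determined by an element `e`
(the splitting object of the idempotent endomorphism `a ↦ e * a` of `A` when
`e` is idempotent). -/
def idemMod (e : A) : QMod.{u, u} A where
  carrier := { a : A // e * a = a }
  act x b := ⟨x.1 * b, by rw [← mul_assoc, x.2]⟩
  act_one x := Subtype.ext (mul_one _)
  act_mul x a b := Subtype.ext (mul_assoc _ _ _).symm
  sSup_act s a := by
    apply Subtype.ext
    simp only [subtype_iSup_val]
    show sSup (Subtype.val '' s) * a = _
    rw [UQuantale.sSup_mul, iSup_image]
  act_sSup x s := by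
    apply Subtype.ext
    simp only [subtype_iSup_val]
    exact UQuantale.mul_sSup x.1 s

/-- For an idempotent `e`, the *corner* quantale `eAe = {x : A // e * x * e = x}`:
multiplication is that of `A`, the unit is `e`, and suprema are computed in `A`. -/
def cornerQuantale (e : A) (he : e * e = e) : UQuantale { x : A // e * x * e = x } := by
  have hleft : ∀ x : A, e * x * e = x → e * x = x := fun x hx => by
    rw [← hx, ← mul_assoc, ← mul_assoc, he]
  have hright : ∀ x : A, e * x * e = x → x * e = x := fun x hx => by
    rw [← hx, mul_assoc, he]
  exact
  { subtypeCompleteLattice (fun x : A => e * x * e = x) with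
    mul := fun x y => ⟨x.1 * y.1, by
      rw [← mul_assoc, hleft x.1 x.2, mul_assoc, hright y.1 y.2]⟩
    one := ⟨e, by rw [he, he]⟩
    mul_assoc := fun x y z => Subtype.ext (mul_assoc _ _ _)
    one_mul := fun x => Subtype.ext (hleft x.1 x.2)
    mul_one := fun x => Subtype.ext (hright x.1 x.2)
    mul_sSup := fun a s => by
      apply Subtype.ext
      simp only [subtype_iSup_val]
      show a.1 * sSup (Subtype.val '' s) = _
      rw [UQuantale.mul_sSup, iSup_image]
      rfl
    sSup_mul := fun s b => by
      apply Subtype.ext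
      simp only [subtype_iSup_val]
      show sSup (Subtype.val '' s) * b.1 = _
      rw [UQuantale.sSup_mul, iSup_image]
      rfl
  }

/-- `e` is a *full* idempotent: `e * e = e` and `AeA = A`, i.e. every element of `A`
is a supremum of elements of the form `a * e * a'`. -/
def IsFullIdempotent (e : A) : Prop :=
  e * e = e ∧
    ∀ x : A, ∃ (ι : Type u) (f g : ι → A), x = ⨆ i, f i * e * g i

end Idem

/-!
Restriction to the "corner" `M ↦ Me = {m | m·e = m}` is a functor `Mod_A ⥤ Mod_{eAe}`.
For any idempotent `e` it is essentially surjective: an `eAe`-module `N` is recovered as the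
corner of the coinduced `A`-module `Hom_{eAe}(Ae, N)`, via evaluation at `e ∈ Ae`.
Fullness of `e` lets us write `1 = ⋁ᵢ uᵢ vᵢ` with `uᵢ ∈ Ae` and `vᵢ ∈ eA`; then every `A`-linear
`φ : M → N` satisfies `φ m = ⋁ᵢ φ(m·uᵢ)·vᵢ`, where only the restriction of `φ` to `Me` is used,
and the same formula extends every `eAe`-linear map `Me → Ne`. So the functor is fully faithful.
-/

open CategoryTheory

abbrev Corner {A : Type u} [UQuantale A] (e : A) := { x : A // e * x * e = x }

-- The quantale structure of `eAe` depends on a proof of `e * e = e`; passing it as a `Fact`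
-- lets it be an instance.
instance Corner.instUQuantale {A : Type u} [UQuantale A] (e : A) [Fact (e * e = e)] :
    UQuantale (Corner e) :=
  cornerQuantale e Fact.out

namespace Corner

variable {A : Type u} [UQuantale A] {e : A}

theorem mem_of_mul_eq {a : A} (h₁ : e * a = a) (h₂ : a * e = a) : e * a * e = a := by
  rw [h₁, h₂]

variable [Fact (e * e = e)]

theorem e_mul (x : Corner e) : e * x.1 = x.1 := by
  rw [← x.2, ← mul_assoc, ← mul_assoc, Fact.out (p := e * e = e)]

theorem mul_e (x : Corner e) : x.1 * e = x.1 := by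
  rw [← x.2, mul_assoc, Fact.out (p := e * e = e)]

theorem e_mul_e_mul (a : A) : e * (e * a) = e * a := by
  rw [← mul_assoc, Fact.out (p := e * e = e)]

end Corner

structure UnitDecomposition {A : Type u} [UQuantale A] (e : A) where
  ι : Type w
  u : ι → A
  v : ι → A
  u_mul_e : ∀ i, u i * e = u i
  e_mul_v : ∀ i, e * v i = v i
  iSup_mul : ⨆ i, u i * v i = 1

theorem IsFullIdempotent.nonempty_unitDecomposition {A : Type u} [UQuantale A] {e : A}
    (h : IsFullIdempotent e) : Nonempty (UnitDecomposition.{u, u} e) := by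
  obtain ⟨ι, f, g, hfg⟩ := h.2 1
  refine ⟨⟨ι, fun i => f i * e, fun i => e * g i, fun i => by rw [mul_assoc, h.1],
    fun i => by rw [← mul_assoc, h.1], ?_⟩⟩
  rw [hfg]
  exact iSup_congr fun i => by rw [← mul_assoc, mul_assoc (f i) e e, h.1]

namespace QMod

variable {A : Type u} [UQuantale A]

theorem comp_val {M N P : QMod.{u, v} A} (f : M ⟶ N) (g : N ⟶ P) :
    (f ≫ g).1 = g.1 ∘ f.1 := rfl

theorem comp_sSup {M N P : QMod.{u, v} A} (f : M ⟶ N) (s : Set (N ⟶ P)) :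
    f ≫ sSup s = ⨆ g ∈ s, f ≫ g :=
  Subtype.ext <| funext fun m => by simp only [comp_val, iSup_hom_apply]; rfl

theorem iSup_comp {M N P : QMod.{u, v} A} {ι : Sort*} (F : ι → (M ⟶ N)) (g : N ⟶ P) :
    (⨆ i, F i) ≫ g = ⨆ i, F i ≫ g :=
  Subtype.ext <| funext fun m => by
    simp only [comp_val, Function.comp_apply, iSup_hom_apply, hom_iSup]

theorem isHom_of_iSup {M N : QMod.{u, v} A} {f : M.carrier → N.carrier}
    (hsup : ∀ {ι : Type v} (g : ι → M.carrier), f (⨆ i, g i) = ⨆ i, f (g i))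
    (hact : ∀ m a, f (M.act m a) = N.act (f m) a) : IsHom M N f := by
  refine ⟨fun s => ?_, hact⟩
  rw [sSup_eq_iSup', hsup, iSup_subtype']

theorem isIso_of_bijective {M N : QMod.{u, v} A} (f : M ⟶ N) (hf : Function.Bijective f.1) :
    IsIso f := by
  obtain ⟨g, hgf, hfg⟩ := Function.bijective_iff_has_inverse.mp hf
  have hg : IsHom N M g := by
    refine ⟨fun s => hf.1 ?_, fun n a => hf.1 ?_⟩
    · rw [hfg (sSup s), sSup_eq_iSup]
      simp only [hom_iSup, hfg _]
    · rw [hfg, f.2.2, hfg]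
  exact ⟨⟨⟨g, hg⟩, Subtype.ext (funext hgf), Subtype.ext (funext hfg)⟩⟩

variable (A) in
abbrev regular : QMod.{u, u} A where
  carrier := A
  act := (· * ·)
  act_one := mul_one
  act_mul a b c := (mul_assoc a b c).symm
  sSup_act := UQuantale.sSup_mul
  act_sSup := UQuantale.mul_sSup

def leftMul (a : A) : regular A ⟶ regular A :=
  ⟨fun b : A => a * b, UQuantale.mul_sSup a, fun b c => (mul_assoc a b c).symm⟩

theorem leftMul_one : leftMul (1 : A) = 𝟙 (regular A) :=
  Subtype.ext (funext fun b : A => one_mul b)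

theorem leftMul_mul (a b : A) : leftMul (a * b) = leftMul b ≫ leftMul a :=
  Subtype.ext (funext fun c : A => mul_assoc a b c)

theorem leftMul_iSup {ι : Sort*} (a : ι → A) : leftMul (⨆ i, a i) = ⨆ i, leftMul (a i) :=
  Subtype.ext <| funext fun b => by rw [iSup_hom_apply]; exact UQuantale.iSup_mul a b

def toSpanSingleton (M : QMod.{u, u} A) (m : M.carrier) : regular A ⟶ M :=
  ⟨M.act m, M.act_sSup m, M.act_mul m⟩

section CornerRestriction

variable {e : A} [Fact (e * e = e)]

-- Reducible, so that `subtype_iSup_val` and `subtype_sSup_val` apply to its suprema.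
variable (e) in
abbrev cornerPart (M : QMod.{u, v} A) : QMod.{u, v} (Corner e) where
  carrier := { m : M.carrier // M.act m e = m }
  act m x := ⟨M.act m.1 x.1, by rw [← M.act_mul, Corner.mul_e]⟩
  act_one m := Subtype.ext m.2
  act_mul m x y := Subtype.ext (M.act_mul m.1 x.1 y.1)
  sSup_act s x := Subtype.ext <| by
    simp only [subtype_sSup_val, subtype_iSup_val]
    rw [M.sSup_act, iSup_image]
  act_sSup m s := Subtype.ext <| by
    show M.act m.1 (sSup (Subtype.val '' s)) = _
    simp only [subtype_iSup_val]
    rw [M.act_sSup, iSup_image]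

def cornerPartMap {M N : QMod.{u, v} A} (φ : M ⟶ N) : M.cornerPart e ⟶ N.cornerPart e :=
  ⟨fun m => (⟨φ.1 m.1, by rw [← φ.2.2, m.2]⟩ : (N.cornerPart e).carrier),
    fun s => Subtype.ext <| by simp only [subtype_sSup_val, sSup_image, subtype_iSup_val, hom_iSup],
    fun m x => Subtype.ext (φ.2.2 m.1 x.1)⟩

theorem cornerPartMap_apply_val {M N : QMod.{u, v} A} (φ : M ⟶ N)
    (m : (M.cornerPart e).carrier) : ((cornerPartMap φ).1 m).1 = φ.1 m.1 := rfl

theorem cornerPartMap_id (M : QMod.{u, v} A) : cornerPartMap (𝟙 M) = 𝟙 (M.cornerPart e) := rfl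

theorem cornerPartMap_comp {M N P : QMod.{u, v} A} (φ : M ⟶ N) (ψ : N ⟶ P) :
    cornerPartMap (φ ≫ ψ) = (cornerPartMap φ ≫ cornerPartMap ψ : M.cornerPart e ⟶ _) := rfl

theorem cornerPartMap_iSup {M N : QMod.{u, v} A} {ι : Sort*} (F : ι → (M ⟶ N)) :
    cornerPartMap (⨆ i, F i) = (⨆ i, cornerPartMap (F i) : M.cornerPart e ⟶ _) :=
  Subtype.ext <| funext fun m => Subtype.ext <| by
    simp only [cornerPartMap_apply_val, iSup_hom_apply, subtype_iSup_val]

variable (e) in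
def cornerRestriction : QMod.{u, v} A ⥤ QMod.{u, v} (Corner e) where
  obj M := M.cornerPart e
  map := cornerPartMap
  map_id := cornerPartMap_id
  map_comp := cornerPartMap_comp

def cornerPartOfAct {M : QMod.{u, v} A} (m : M.carrier) {a : A} (ha : a * e = a) :
    (M.cornerPart e).carrier :=
  ⟨M.act m a, by rw [← M.act_mul, ha]⟩

theorem cornerPartOfAct_iSup {M : QMod.{u, v} A} {ι : Sort*} (g : ι → M.carrier) {a : A}
    (ha : a * e = a) : cornerPartOfAct (⨆ i, g i) ha = ⨆ i, cornerPartOfAct (g i) ha :=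
  Subtype.ext <| by
    rw [subtype_iSup_val]
    exact M.iSup_act g a

end CornerRestriction

section Coinduction

variable {e : A} [Fact (e * e = e)]

variable (e) in
def coinduce (N : QMod.{u, u} (Corner e)) : QMod.{u, u} A where
  carrier := (regular A).cornerPart e ⟶ N
  act φ a := cornerPartMap (leftMul a) ≫ φ
  act_one φ := by rw [leftMul_one, cornerPartMap_id, Category.id_comp]
  act_mul φ a b := by rw [leftMul_mul, cornerPartMap_comp, Category.assoc]
  sSup_act s a := comp_sSup _ s
  act_sSup φ s := by
    simp only [sSup_eq_iSup, leftMul_iSup, cornerPartMap_iSup, iSup_comp]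

variable (N : QMod.{u, u} (Corner e))

theorem coinduce_val_iSup {ι : Sort*} (t : ι → (coinduce e N).carrier)
    (y : ((regular A).cornerPart e).carrier) :
    (⨆ i, t i).1 y = ⨆ i, (t i).1 y :=
  iSup_hom_apply t y

variable (e) in
def cornerGen : ((regular A).cornerPart e).carrier := ⟨e, Fact.out⟩

variable (e) in
def leftMulCorner : (regular A).cornerPart e ⟶ regular (Corner e) :=
  ⟨fun y => ⟨e * y.1, Corner.mem_of_mul_eq (Corner.e_mul_e_mul y.1)
      (by rw [mul_assoc]; exact congrArg (e * ·) y.2)⟩,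
    fun s => Subtype.ext <| by
      -- suprema in `eAe` come from `cornerQuantale`, which `simp` does not unfold
      refine Eq.trans ?_ ((subtype_iSup_val _).trans (iSup_congr fun _ => subtype_iSup_val _)).symm
      simp only [subtype_sSup_val, sSup_image, UQuantale.mul_iSup],
    fun y x => Subtype.ext (mul_assoc e y.1 x.1).symm⟩

def coinduceCounit : (coinduce e N).cornerPart e ⟶ N :=
  ⟨fun φ => φ.1.1 (cornerGen e),
    fun s => by simp only [subtype_sSup_val, sSup_image, coinduce_val_iSup],
    fun φ x => by
      show φ.1.1 ⟨x.1 * e, _⟩ = _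
      rw [← φ.1.2.2]
      exact congrArg φ.1.1 (Subtype.ext ((Corner.mul_e x).trans (Corner.e_mul x).symm))⟩

def coinduceCounitInvFun (n : N.carrier) : ((coinduce e N).cornerPart e).carrier :=
  ⟨leftMulCorner e ≫ toSpanSingleton N n, Subtype.ext <| funext fun y =>
    congrArg (N.act n) (Subtype.ext (Corner.e_mul_e_mul y.1))⟩

theorem coinduceCounit_leftInverse :
    Function.LeftInverse (coinduceCounitInvFun N) (coinduceCounit N).1 := fun φ => by
  refine Subtype.ext <| Subtype.ext <| funext fun y => ?_
  show N.act (φ.1.1 (cornerGen e)) ⟨e * y.1, _⟩ = φ.1.1 y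
  rw [← φ.1.2.2]
  -- `φ` lies in the corner, i.e. `φ(e·y) = φ(y)`
  conv_rhs => rw [← φ.2]
  exact congrArg φ.1.1 (Subtype.ext (Corner.e_mul_e_mul (e := e) y.1))

theorem coinduceCounit_rightInverse :
    Function.RightInverse (coinduceCounitInvFun N) (coinduceCounit N).1 := fun n => by
  show N.act n ⟨e * e, _⟩ = n
  conv_rhs => rw [← N.act_one n]
  exact congrArg (N.act n) (Subtype.ext (Fact.out (p := e * e = e)))

instance isIso_coinduceCounit : IsIso (coinduceCounit N) :=
  isIso_of_bijective _
    ⟨(coinduceCounit_leftInverse N).injective, (coinduceCounit_rightInverse N).surjective⟩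

variable (e) in
theorem cornerRestriction_essSurj : (cornerRestriction.{u, u} e).EssSurj :=
  ⟨fun N => ⟨coinduce e N, ⟨(asIso (coinduceCounit N) : (coinduce e N).cornerPart e ≅ N)⟩⟩⟩

end Coinduction

end QMod

namespace UnitDecomposition

open QMod

variable {A : Type u} [UQuantale A] {e : A} [Fact (e * e = e)] (D : UnitDecomposition e)
  {M N : QMod.{u, v} A}

theorem hom_cornerPartOfAct (h : M.cornerPart e ⟶ N.cornerPart e) (m : M.carrier) {y : A}
    (hy : y * e = y) :
    (h.1 (cornerPartOfAct m hy)).1 =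
      ⨆ i, N.act (h.1 (cornerPartOfAct m (D.u_mul_e i))).1 (D.v i * y) := by
  have hmem : ∀ i, e * (D.v i * y) * e = D.v i * y := fun i =>
    Corner.mem_of_mul_eq (by rw [← mul_assoc, D.e_mul_v]) (by rw [mul_assoc, hy])
  have hdecomp : cornerPartOfAct m hy =
      ⨆ i, (M.cornerPart e).act (cornerPartOfAct m (D.u_mul_e i)) ⟨D.v i * y, hmem i⟩ := by
    refine Subtype.ext ?_
    simp only [subtype_iSup_val]
    show M.act m y = ⨆ i, M.act (M.act m (D.u i)) (D.v i * y)
    simp only [← M.act_mul, ← M.act_iSup, ← mul_assoc, ← UQuantale.iSup_mul, D.iSup_mul, one_mul]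
  rw [hdecomp, hom_iSup]
  simp only [subtype_iSup_val]
  exact iSup_congr fun i =>
    congrArg Subtype.val (h.2.2 (cornerPartOfAct m (D.u_mul_e i)) ⟨_, hmem i⟩)

def preimageFun (h : M.cornerPart e ⟶ N.cornerPart e) (m : M.carrier) : N.carrier :=
  ⨆ i, N.act (h.1 (cornerPartOfAct m (D.u_mul_e i))).1 (D.v i)

theorem preimageFun_iSup (h : M.cornerPart e ⟶ N.cornerPart e) {κ : Sort*} (g : κ → M.carrier) :
    D.preimageFun h (⨆ j, g j) = ⨆ j, D.preimageFun h (g j) := by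
  simp only [preimageFun]
  rw [iSup_comm]
  refine iSup_congr fun i => ?_
  rw [cornerPartOfAct_iSup, hom_iSup h, subtype_iSup_val, iSup_act]

theorem preimageFun_act (h : M.cornerPart e ⟶ N.cornerPart e) (m : M.carrier) (a : A) :
    D.preimageFun h (M.act m a) = N.act (D.preimageFun h m) a := by
  have hau : ∀ j, a * D.u j * e = a * D.u j := fun j => by rw [mul_assoc, D.u_mul_e]
  have hshift : ∀ j, cornerPartOfAct (M.act m a) (D.u_mul_e j) = cornerPartOfAct m (hau j) :=
    fun j => Subtype.ext (M.act_mul m a (D.u j)).symm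
  calc D.preimageFun h (M.act m a)
      = ⨆ j, ⨆ i, N.act (h.1 (cornerPartOfAct m (D.u_mul_e i))).1
          (D.v i * (a * D.u j) * D.v j) := by
        refine iSup_congr fun j => ?_
        rw [hshift, D.hom_cornerPartOfAct h m (hau j), iSup_act]
        simp only [← N.act_mul, mul_assoc]
    _ = ⨆ i, N.act (h.1 (cornerPartOfAct m (D.u_mul_e i))).1 (D.v i * a) := by
        rw [iSup_comm]
        refine iSup_congr fun i => ?_
        rw [← N.act_iSup]
        simp only [mul_assoc, ← UQuantale.mul_iSup, D.iSup_mul, mul_one]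
    _ = N.act (D.preimageFun h m) a := by
        simp only [preimageFun, iSup_act, ← N.act_mul]

def preimage (h : M.cornerPart e ⟶ N.cornerPart e) : M ⟶ N :=
  ⟨D.preimageFun h, isHom_of_iSup (D.preimageFun_iSup h) (D.preimageFun_act h)⟩

theorem preimage_map (φ : M ⟶ N) : D.preimage (cornerPartMap φ) = φ := by
  refine Subtype.ext <| funext fun m => ?_
  show ⨆ i, N.act (φ.1 (M.act m (D.u i))) (D.v i) = φ.1 m
  simp only [← φ.2.2, ← hom_iSup φ, ← M.act_mul, ← M.act_iSup, D.iSup_mul, M.act_one]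

theorem map_preimage (h : M.cornerPart e ⟶ N.cornerPart e) :
    cornerPartMap (D.preimage h) = h := by
  refine Subtype.ext <| funext fun m => Subtype.ext ?_
  have heu : ∀ i, e * (e * D.u i) * e = e * D.u i := fun i =>
    Corner.mem_of_mul_eq (Corner.e_mul_e_mul _) (by rw [mul_assoc, D.u_mul_e])
  have hact : ∀ i, cornerPartOfAct m.1 (D.u_mul_e i) = (M.cornerPart e).act m ⟨_, heu i⟩ :=
    fun i => Subtype.ext <| by
      show M.act m.1 (D.u i) = M.act m.1 (e * D.u i)
      rw [M.act_mul, m.2]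
  calc ⨆ i, N.act (h.1 (cornerPartOfAct m.1 (D.u_mul_e i))).1 (D.v i)
      = ⨆ i, N.act (h.1 m).1 (e * (D.u i * D.v i)) := iSup_congr fun i => by
        rw [hact, h.2.2, ← mul_assoc, N.act_mul]
    _ = (h.1 m).1 := by rw [← N.act_iSup, ← UQuantale.mul_iSup, D.iSup_mul, mul_one, (h.1 m).2]

def fullyFaithful : (cornerRestriction.{u, v} e).FullyFaithful where
  preimage := D.preimage
  map_preimage := D.map_preimage
  preimage_map := D.preimage_map

end UnitDecomposition

/-- if `e` is a full idempotent in a quantale `A` (`e*e = e` and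
`AeA = A`), then `A` and the corner quantale `eAe` are Morita equivalent. -/
theorem morita_corner_of_full {A : Type u} [UQuantale A] (e : A)
    (hfull : IsFullIdempotent e) :
    letI : UQuantale { x : A // e * x * e = x } := cornerQuantale e hfull.1
    MoritaEquivalent A { x : A // e * x * e = x } := by
  have : Fact (e * e = e) := ⟨hfull.1⟩
  obtain ⟨D⟩ := hfull.nonempty_unitDecomposition
  have hR := D.fullyFaithful
  have : (QMod.cornerRestriction.{u, u} e).IsEquivalence :=
    { faithful := hR.faithful, full := hR.full, essSurj := QMod.cornerRestriction_essSurj e }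
  exact ⟨(QMod.cornerRestriction e).asEquivalence⟩
end

section
/- Let A be a quantale, X a set, and a ∈ Mat_X(A) an idempotent matrix (a⋆a = a). Let aA^(X) denote the splitting object of the idempotent A-module endomorphism a·− : A^(X) → A^(X). Then there are isomorphisms of sup-lattices Hom_A(aA^(X), A^(X)) ≅ Mat_X(A)a and Hom_A(aA^(X), aA^(X)) ≅ a Mat_X(A) a, where Mat_X(A)a is the image of the idempotent map −⋆a : Mat_X(A) → Mat_X(A) and a Mat_X(A) a is the image of the idempotent map b ↦ a⋆b⋆a. -/
open CategoryTheory Set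

universe u v w

/-! ### Matrices with values in a quantale -/

section Matrices

/-- The type of `A`-matrices of size `X × X`: maps `X × X → A`. -/
def Mat (X : Type u) (A : Type u) : Type u := X × X → A

variable (X : Type u) (A : Type u) [UQuantale A]

instance : CompleteLattice (Mat X A) :=
  inferInstanceAs (CompleteLattice (X × X → A))

theorem mat_sSup_apply (s : Set (Mat X A)) (p : X × X) : sSup s p = ⨆ a ∈ s, a p :=
  sSup_apply.trans (iSup_subtype'' s fun a => a p)

theorem mat_iSup_apply {ι : Sort w} (f : ι → Mat X A) (p : X × X) :
    (⨆ i, f i) p = ⨆ i, f i p :=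
  iSup_apply

/-- Matrix product: `(a ⋆ b)(x,z) = ⨆ y, a(x,y) * b(y,z)`. -/
def matMul (a b : Mat X A) : Mat X A :=
  fun p => ⨆ y : X, a (p.1, y) * b (y, p.2)

open Classical in
/-- The identity matrix: the unit of `A` on the diagonal and `⊥` elsewhere. -/
noncomputable def matId : Mat X A :=
  fun p => if p.1 = p.2 then (1 : A) else ⊥

theorem mat_assoc (a b c : Mat X A) :
    matMul X A (matMul X A a b) c = matMul X A a (matMul X A b c) := by
  funext p
  show ⨆ z, (⨆ y, a (p.1, y) * b (y, z)) * c (z, p.2) =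
    ⨆ y, a (p.1, y) * ⨆ z, b (y, z) * c (z, p.2)
  simp only [UQuantale.iSup_mul, UQuantale.mul_iSup, mul_assoc]
  exact iSup_comm

theorem mat_one_mul (a : Mat X A) : matMul X A (matId X A) a = a := by
  classical
  funext p
  show ⨆ y, matId X A (p.1, y) * a (y, p.2) = a p
  apply le_antisymm
  · refine iSup_le fun y => ?_
    show (if p.1 = y then (1 : A) else ⊥) * a (y, p.2) ≤ a p
    split_ifs with h
    · subst h; rw [one_mul]
    · rw [UQuantale.bot_mul]; exact bot_le
  · have h1 : a p = matId X A (p.1, p.1) * a (p.1, p.2) := by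
      show a p = (if p.1 = p.1 then (1 : A) else ⊥) * a (p.1, p.2)
      rw [if_pos rfl, one_mul]
    exact h1.le.trans (le_iSup (fun y => matId X A (p.1, y) * a (y, p.2)) p.1)

theorem mat_mul_one (a : Mat X A) : matMul X A a (matId X A) = a := by
  classical
  funext p
  show ⨆ y, a (p.1, y) * matId X A (y, p.2) = a p
  apply le_antisymm
  · refine iSup_le fun y => ?_
    show a (p.1, y) * (if y = p.2 then (1 : A) else ⊥) ≤ a p
    split_ifs with h
    · subst h; rw [mul_one]
    · rw [UQuantale.mul_bot]; exact bot_le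
  · have h1 : a p = a (p.1, p.2) * matId X A (p.2, p.2) := by
      show a p = a (p.1, p.2) * (if p.2 = p.2 then (1 : A) else ⊥)
      rw [if_pos rfl, mul_one]
    exact h1.le.trans (le_iSup (fun y => a (p.1, y) * matId X A (y, p.2)) p.2)

theorem mat_mul_sSup (a : Mat X A) (s : Set (Mat X A)) :
    matMul X A a (sSup s) = ⨆ b ∈ s, matMul X A a b := by
  funext p
  show ⨆ y, a (p.1, y) * sSup s (y, p.2) = (⨆ b ∈ s, matMul X A a b) p
  simp only [mat_sSup_apply, mat_iSup_apply]
  calc ⨆ y, a (p.1, y) * ⨆ b ∈ s, b (y, p.2)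
      = ⨆ y, ⨆ b ∈ s, a (p.1, y) * b (y, p.2) := by
        simp only [UQuantale.mul_iSup]
    _ = ⨆ b ∈ s, ⨆ y, a (p.1, y) * b (y, p.2) := by
        rw [iSup_comm]
        exact iSup_congr fun b => iSup_comm
    _ = ⨆ b ∈ s, matMul X A a b p := rfl

theorem mat_sSup_mul (s : Set (Mat X A)) (b : Mat X A) :
    matMul X A (sSup s) b = ⨆ a ∈ s, matMul X A a b := by
  funext p
  show ⨆ y, sSup s (p.1, y) * b (y, p.2) = (⨆ a ∈ s, matMul X A a b) p
  simp only [mat_sSup_apply, mat_iSup_apply]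
  calc ⨆ y, (⨆ a ∈ s, a (p.1, y)) * b (y, p.2)
      = ⨆ y, ⨆ a ∈ s, a (p.1, y) * b (y, p.2) := by
        simp only [UQuantale.iSup_mul]
    _ = ⨆ a ∈ s, ⨆ y, a (p.1, y) * b (y, p.2) := by
        rw [iSup_comm]
        exact iSup_congr fun a => iSup_comm
    _ = ⨆ a ∈ s, matMul X A a b p := rfl

/-- The quantale of `A`-valued `X × X`-matrices: pointwise suprema, matrix
multiplication, identity matrix as unit. -/
noncomputable instance : UQuantale (Mat X A) :=
  { (inferInstanceAs (CompleteLattice (Mat X A)) : CompleteLattice (Mat X A)) with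
    mul := matMul X A
    one := matId X A
    mul_assoc := mat_assoc X A
    one_mul := mat_one_mul X A
    mul_one := mat_mul_one X A
    mul_sSup := mat_mul_sSup X A
    sSup_mul := mat_sSup_mul X A }

theorem matMul_def (a b : Mat X A) : a * b = matMul X A a b := rfl

theorem matId_def : (1 : Mat X A) = matId X A := rfl

end Matrices

/-! ### The free module `A^(X)` and matrices as its endomorphisms -/

section Free

variable (A : Type u) [UQuantale A] (X : Type u)

/-- The free right `A`-module `A^(X)` on a set `X`: the coproduct of `X` copies of
`A`, isomorphic to the product `A^X`, realized as the module of all maps `X → A`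
with pointwise suprema and pointwise action. -/
def freeQMod : QMod.{u, u} A where
  carrier := X → A
  act f a := fun x => f x * a
  act_one f := by funext x; exact mul_one _
  act_mul f a b := by funext x; exact (mul_assoc _ _ _).symm
  sSup_act s a := by
    funext x
    simp only [sSup_apply, iSup_apply, UQuantale.iSup_mul]
    exact iSup_subtype'' s fun f => f x * a
  act_sSup f s := by
    funext x
    simp only [iSup_apply, UQuantale.mul_sSup]

theorem free_iSup_apply {ι : Sort w} (F : ι → (freeQMod A X).carrier) (x : X) :
    (⨆ i, F i) x = ⨆ i, F i x :=
  iSup_apply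

/-- The endomorphism `a · - : A^(X) ⟶ A^(X)` of the free module determined by a
matrix `a`, namely `(a · f) x = ⨆ x', a (x, x') * f x'`. -/
noncomputable def matToEnd (a : Mat X A) : freeQMod A X ⟶ freeQMod A X := by
  refine ⟨fun f x => ⨆ y, a (x, y) * f y, ?_, ?_⟩
  · intro s
    funext x
    have h1 : (sSup s : X → A) = fun y => ⨆ g ∈ s, g y := by
      funext y; exact sSup_apply.trans (iSup_subtype'' s fun g => g y)
    show ⨆ y, a (x, y) * sSup s y = _
    erw [h1]
    simp only [iSup_apply]
    calc ⨆ y, a (x, y) * ⨆ g ∈ s, g y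
        = ⨆ y, ⨆ g ∈ s, a (x, y) * g y := by simp only [UQuantale.mul_iSup]
      _ = ⨆ g ∈ s, ⨆ y, a (x, y) * g y := by
          rw [iSup_comm]; exact iSup_congr fun g => iSup_comm
      _ = (⨆ m ∈ s, fun x => ⨆ y, a (x, y) * m y) x := by
          simp only [iSup_apply]
  · intro f b
    funext x
    show ⨆ y, a (x, y) * (f y * b) = (⨆ y, a (x, y) * f y) * b
    rw [UQuantale.iSup_mul]
    simp only [mul_assoc]

end Free

/-!
Composing with the retraction `p` and the section `i` identifies `Hom_A(aA^(X), N)` with the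
morphisms `g : A^(X) → N` satisfying `g ∘ (a · -) = g`, and `Hom_A(aA^(X), aA^(X))` with the
endomorphisms `g` of `A^(X)` satisfying `(a · -) ∘ g ∘ (a · -) = g`. Both identifications are
monotone in both directions, hence order isomorphisms, which preserve all suprema. Finally
`b ↦ b · -` is an order isomorphism from matrices onto the endomorphisms of `A^(X)` turning the
matrix product into composition, so these fixed-point conditions become `b ⋆ a = b` and
`a ⋆ b ⋆ a = b`.
-/

theorem UQuantale.mul_le_mul_right {A : Type u} [UQuantale A] {b c : A} (h : b ≤ c) (a : A) :
    b * a ≤ c * a :=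
  calc b * a ≤ ⨆ x ∈ ({b, c} : Set A), x * a := le_iSup₂ (f := fun x _ => x * a) b (by simp)
    _ = sSup {b, c} * a := (UQuantale.sSup_mul _ a).symm
    _ = c * a := by rw [sSup_pair, sup_of_le_right h]

def OrderIso.subtypeCongr {α β : Type*} [Preorder α] [Preorder β] {p : α → Prop}
    {q : β → Prop} (e : α ≃o β) (h : ∀ a, p a ↔ q (e a)) : { a // p a } ≃o { b // q b } where
  toEquiv := e.toEquiv.subtypeEquiv h
  map_rel_iff' := e.le_iff_le

namespace QMod

variable {A : Type u} [UQuantale A]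

theorem hom_monotone {M N : QMod.{u, v} A} (f : M ⟶ N) : Monotone f.1 := fun m m' h => by
  have hsup := f.2.1 {m, m'}
  rw [sSup_pair, sup_of_le_right h] at hsup
  rw [hsup]
  exact le_iSup₂ (f := fun x _ => f.1 x) m (by simp)

theorem comp_le_comp_left {M N K : QMod.{u, v} A} (f : M ⟶ N) {g g' : N ⟶ K} (h : g ≤ g') :
    f ≫ g ≤ f ≫ g' :=
  fun m => h (f.1 m)

theorem comp_le_comp_right {M N K : QMod.{u, v} A} {f f' : M ⟶ N} (h : f ≤ f') (g : N ⟶ K) :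
    f ≫ g ≤ f' ≫ g :=
  fun m => hom_monotone g (h m)

section Retract

variable {B P : QMod.{u, v} A} (p : B ⟶ P) (i : P ⟶ B)

theorem section_comp_retraction_comp (hpi : i ≫ p = 𝟙 P) {N : QMod.{u, v} A} (f : P ⟶ N) :
    i ≫ p ≫ f = f := by
  rw [← Category.assoc, hpi, Category.id_comp]

def retractHomOrderIso (hpi : i ≫ p = 𝟙 P) {e : B ⟶ B} (he : p ≫ i = e) (N : QMod.{u, v} A) :
    (P ⟶ N) ≃o { g : B ⟶ N // e ≫ g = g } :=
  Equiv.toOrderIso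
    { toFun := fun f => ⟨p ≫ f, by
        rw [← he, Category.assoc, section_comp_retraction_comp p i hpi]⟩
      invFun := fun g => i ≫ g.1
      left_inv := section_comp_retraction_comp p i hpi
      right_inv := fun g => Subtype.ext <| by
        show p ≫ i ≫ g.1 = g.1
        rw [← Category.assoc, he, g.2] }
    (fun _ _ h => comp_le_comp_left p h) (fun _ _ h => comp_le_comp_left i h)

def retractEndOrderIso (hpi : i ≫ p = 𝟙 P) {e : B ⟶ B} (he : p ≫ i = e) :
    (P ⟶ P) ≃o { g : B ⟶ B // e ≫ g ≫ e = g } :=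
  Equiv.toOrderIso
    { toFun := fun f => ⟨p ≫ f ≫ i, by
        simp only [← he, Category.assoc, section_comp_retraction_comp p i hpi]⟩
      invFun := fun g => i ≫ g.1 ≫ p
      left_inv := fun f => by
        simp only [Category.assoc, section_comp_retraction_comp p i hpi, hpi, Category.comp_id]
      right_inv := fun g => Subtype.ext <| by
        calc p ≫ (i ≫ g.1 ≫ p) ≫ i = (p ≫ i) ≫ g.1 ≫ p ≫ i := by simp only [Category.assoc]
          _ = g.1 := by rw [he]; exact g.2 }
    (fun _ _ h => comp_le_comp_left p (comp_le_comp_right h i))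
    (fun _ _ h => comp_le_comp_left i (comp_le_comp_right h p))

end Retract

end QMod

section FreeModule

variable {A : Type u} [UQuantale A] {X : Type u}

noncomputable def basisVec (y : X) : (freeQMod A X).carrier := fun z => matId X A (z, y)

theorem iSup_act_basisVec (f : (freeQMod A X).carrier) :
    ⨆ y, (freeQMod A X).act (basisVec y) (f y) = f := by
  funext z
  rw [free_iSup_apply]
  exact congrFun (mat_one_mul X A fun q => f q.1) (z, z)

noncomputable def endToMat (g : freeQMod A X ⟶ freeQMod A X) : Mat X A :=
  fun q => g.1 (basisVec q.2) q.1

theorem endToMat_matToEnd (b : Mat X A) : endToMat (matToEnd A X b) = b :=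
  mat_mul_one X A b

theorem matToEnd_endToMat (g : freeQMod A X ⟶ freeQMod A X) :
    matToEnd A X (endToMat g) = g := by
  refine Subtype.ext (funext fun f => ?_)
  conv_rhs => rw [← iSup_act_basisVec f, QMod.hom_iSup]
  funext x
  rw [free_iSup_apply]
  exact iSup_congr fun y => by rw [g.2.2]; rfl

theorem matToEnd_injective : Function.Injective (matToEnd A X) :=
  Function.LeftInverse.injective endToMat_matToEnd

theorem matToEnd_mul (b c : Mat X A) :
    matToEnd A X (b * c) = matToEnd A X c ≫ matToEnd A X b := by
  refine Subtype.ext (funext fun f => funext fun x => ?_)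
  show ⨆ z, (⨆ y, b (x, y) * c (y, z)) * f z = ⨆ y, b (x, y) * ⨆ z, c (y, z) * f z
  simp only [UQuantale.iSup_mul, UQuantale.mul_iSup, mul_assoc]
  exact iSup_comm

variable (A X) in
noncomputable def matOrderIso : Mat X A ≃o (freeQMod A X ⟶ freeQMod A X) :=
  Equiv.toOrderIso ⟨matToEnd A X, endToMat, endToMat_matToEnd, matToEnd_endToMat⟩
    (fun _ _ h f x => iSup_mono fun y => UQuantale.mul_le_mul_right (h (x, y)) (f y))
    (fun _ _ h q => h (basisVec q.2) q.1)

theorem mul_eq_self_iff_matToEnd (a b : Mat X A) :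
    b * a = b ↔ matToEnd A X a ≫ matToEnd A X b = matToEnd A X b := by
  rw [← matToEnd_mul, matToEnd_injective.eq_iff]

theorem mul_mul_eq_self_iff_matToEnd (a b : Mat X A) :
    a * b * a = b ↔
      matToEnd A X a ≫ matToEnd A X b ≫ matToEnd A X a = matToEnd A X b := by
  rw [← matToEnd_mul, ← matToEnd_mul, matToEnd_injective.eq_iff]

end FreeModule

theorem splitting_hom_lattices_general (A : Type u) [UQuantale A] (X : Type u)
    (a : Mat X A)
    (P : QMod.{u, u} A) (p : freeQMod A X ⟶ P) (i : P ⟶ freeQMod A X)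
    (hip : p ≫ i = matToEnd A X a) (hpi : i ≫ p = 𝟙 P) :
    (∃ φ : (P ⟶ freeQMod A X) → { b : Mat X A // b * a = b },
      Function.Bijective φ ∧ ∀ s, φ (sSup s) = ⨆ f ∈ s, φ f) ∧
    (∃ ψ : (P ⟶ P) → { b : Mat X A // a * b * a = b },
      Function.Bijective ψ ∧ ∀ s, ψ (sSup s) = ⨆ f ∈ s, ψ f) := by
  let φ := (QMod.retractHomOrderIso p i hpi hip _).trans
    ((matOrderIso A X).subtypeCongr (mul_eq_self_iff_matToEnd a)).symm
  let ψ := (QMod.retractEndOrderIso p i hpi hip).trans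
    ((matOrderIso A X).subtypeCongr (mul_mul_eq_self_iff_matToEnd a)).symm
  exact ⟨⟨φ, φ.bijective, φ.map_sSup⟩, ⟨ψ, ψ.bijective, ψ.map_sSup⟩⟩

/-- let `a` be an idempotent matrix over a quantale `A` and let
`P` (with `p : A^(X) ⟶ P`, `i : P ⟶ A^(X)`, `i ∘ p = a·-`, `p ∘ i = id`) be a
splitting object `aA^(X)` of the idempotent endomorphism `a · -` of the free module
`A^(X)`.  Then there are isomorphisms of sup-lattices
`Hom_A(aA^(X), A^(X)) ≅ Mat_X(A)a` and `Hom_A(aA^(X), aA^(X)) ≅ a Mat_X(A) a`,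
where `Mat_X(A)a = {b // b⋆a = b}` is the image of the idempotent map `-⋆a` and
`a Mat_X(A) a = {b // a⋆b⋆a = b}` is the image of the idempotent map `b ↦ a⋆b⋆a`. -/
theorem splitting_hom_lattices (A : Type u) [UQuantale A] (X : Type u)
    (a : Mat X A) (ha : a * a = a)
    (P : QMod.{u, u} A) (p : freeQMod A X ⟶ P) (i : P ⟶ freeQMod A X)
    (hip : p ≫ i = matToEnd A X a) (hpi : i ≫ p = 𝟙 P) :
    (∃ φ : (P ⟶ freeQMod A X) → { b : Mat X A // b * a = b },
      Function.Bijective φ ∧ ∀ s, φ (sSup s) = ⨆ f ∈ s, φ f) ∧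
    (∃ ψ : (P ⟶ P) → { b : Mat X A // a * b * a = b },
      Function.Bijective ψ ∧ ∀ s, ψ (sSup s) = ⨆ f ∈ s, ψ f) :=
  splitting_hom_lattices_general A X a P p i hip hpi
end
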